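/- Let n ≥ 1 and for symmetric C, D ∈ ℝ^{n×n} define OGW(C,D) := (1/n²)(‖C‖_F² + ‖D‖_F² − 2·sup_{P ∈ O_n ∩ E_n} tr(C P D Pᵀ)), where O_n := {P ∈ ℝ^{n×n} : Pᵀ P = I} and E_n := {P ∈ ℝ^{n×n} : P·1 = Pᵀ·1 = 1}. Then OGW is symmetric, i.e., OGW(C,D) = OGW(D,C) for all symmetric C, D, and nonnegative, i.e., OGW(C,D) ≥ 0 for all symmetric C, D. -/

import Mathlib

open Matrix BigOperators

noncomputable section

/-- Squared Frobenius norm of a real matrix. -/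
def frobSq {m n : ℕ} (A : Matrix (Fin m) (Fin n) ℝ) : ℝ := ∑ i, ∑ j, (A i j) ^ 2

/-- Euclidean norm of a real vector. -/
def vnorm {n : ℕ} (v : Fin n → ℝ) : ℝ := Real.sqrt (∑ i, (v i) ^ 2)

/-- Eigenvalues of a real symmetric (Hermitian) matrix, listed in descending order. -/
def eigDesc {n : ℕ} {A : Matrix (Fin n) (Fin n) ℝ} (hA : A.IsHermitian) : Fin n → ℝ :=
  fun i => (hA.eigenvalues ∘ Tuple.sort hA.eigenvalues) i.rev

/-- Conjugating a real symmetric (Hermitian) matrix preserves symmetry. -/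
theorem conjHerm {n m : ℕ} (V : Matrix (Fin n) (Fin m) ℝ) {C : Matrix (Fin n) (Fin n) ℝ}
    (hC : C.IsHermitian) : (Vᵀ * C * V).IsHermitian := by
  have h := Matrix.isHermitian_mul_mul_conjTranspose Vᵀ hC
  simpa using h


/-- The set `O_n ∩ E_n` of orthogonal matrices whose row and column sums all equal `1`. -/
def OE (n : ℕ) : Set (Matrix (Fin n) (Fin n) ℝ) :=
  {P | Pᵀ * P = 1 ∧ (P *ᵥ (fun _ => (1 : ℝ)) = fun _ => 1)
    ∧ (Pᵀ *ᵥ (fun _ => (1 : ℝ)) = fun _ => 1)}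

/-- The orthogonal Gromov-Wasserstein discrepancy `OGW`. -/
def OGW (n : ℕ) (C D : Matrix (Fin n) (Fin n) ℝ) : ℝ :=
  (1 / (n : ℝ) ^ 2) * (frobSq C + frobSq D
    - 2 * sSup ((fun P => Matrix.trace (C * P * D * Pᵀ)) '' (OE n)))

/-! Symmetry: `P ↦ Pᵀ` is an involution of `O_n ∩ E_n` and `tr(C P D Pᵀ) = tr(D Pᵀ C P)`, so the
two suprema range over the same set of values. Nonnegativity: conjugation by an orthogonal `P`
preserves the Frobenius norm, so `2 tr(C (P D Pᵀ)) ≤ ‖C‖² + ‖P D Pᵀ‖² = ‖C‖² + ‖D‖²`. -/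

lemma frobSq_nonneg {m n : ℕ} (A : Matrix (Fin m) (Fin n) ℝ) : 0 ≤ frobSq A := by
  unfold frobSq
  positivity

lemma frobSq_transpose {m n : ℕ} (A : Matrix (Fin m) (Fin n) ℝ) : frobSq Aᵀ = frobSq A := by
  simp only [frobSq, transpose_apply]
  exact Finset.sum_comm

lemma frobSq_eq_trace_transpose_mul {m n : ℕ} (A : Matrix (Fin m) (Fin n) ℝ) :
    frobSq A = trace (Aᵀ * A) := by
  simp only [frobSq, trace, diag, mul_apply, transpose_apply, sq]
  exact Finset.sum_comm

lemma two_mul_trace_mul_le_frobSq_add {m n : ℕ} (A : Matrix (Fin m) (Fin n) ℝ)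
    (B : Matrix (Fin n) (Fin m) ℝ) : 2 * trace (A * B) ≤ frobSq A + frobSq B := by
  rw [← frobSq_transpose B]
  simp only [frobSq, trace, diag, mul_apply, transpose_apply, Finset.mul_sum,
    ← Finset.sum_add_distrib]
  gcongr with i _ j _
  exact (mul_assoc _ _ _).symm.le.trans (two_mul_le_add_sq _ _)

lemma frobSq_mul_mul_transpose {m n : ℕ} {P : Matrix (Fin m) (Fin n) ℝ} (hP : Pᵀ * P = 1)
    (D : Matrix (Fin n) (Fin n) ℝ) : frobSq (P * D * Pᵀ) = frobSq D := by
  have hPDP : (P * D * Pᵀ)ᵀ * (P * D * Pᵀ) = P * (Dᵀ * D) * Pᵀ := by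
    simp only [transpose_mul, transpose_transpose, Matrix.mul_assoc]
    rw [← Matrix.mul_assoc Pᵀ P, hP, Matrix.one_mul]
  rw [frobSq_eq_trace_transpose_mul, hPDP, trace_mul_comm, ← Matrix.mul_assoc, hP,
    Matrix.one_mul, frobSq_eq_trace_transpose_mul]

lemma transpose_mem_OE {n : ℕ} {P : Matrix (Fin n) (Fin n) ℝ} (hP : P ∈ OE n) : Pᵀ ∈ OE n := by
  obtain ⟨horth, hrow, hcol⟩ := hP
  exact ⟨by rw [transpose_transpose]; exact mul_eq_one_comm.mp horth, hcol, by simpa using hrow⟩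

lemma trace_mul_mul_mul_transpose_comm {n : ℕ} (C D P : Matrix (Fin n) (Fin n) ℝ) :
    trace (D * Pᵀ * C * Pᵀᵀ) = trace (C * P * D * Pᵀ) := by
  rw [transpose_transpose, Matrix.mul_assoc, trace_mul_comm]
  simp only [Matrix.mul_assoc]

lemma image_trace_conj_OE_comm {n : ℕ} (C D : Matrix (Fin n) (Fin n) ℝ) :
    (fun P => trace (C * P * D * Pᵀ)) '' OE n = (fun P => trace (D * P * C * Pᵀ)) '' OE n := by
  ext x
  constructor
  · rintro ⟨P, hP, rfl⟩
    exact ⟨Pᵀ, transpose_mem_OE hP, trace_mul_mul_mul_transpose_comm C D P⟩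
  · rintro ⟨P, hP, rfl⟩
    exact ⟨Pᵀ, transpose_mem_OE hP, trace_mul_mul_mul_transpose_comm D C P⟩

lemma two_mul_trace_conj_le {n : ℕ} (C D : Matrix (Fin n) (Fin n) ℝ) {P : Matrix (Fin n) (Fin n) ℝ}
    (hP : Pᵀ * P = 1) : 2 * trace (C * P * D * Pᵀ) ≤ frobSq C + frobSq D := by
  rw [← frobSq_mul_mul_transpose hP D, Matrix.mul_assoc, Matrix.mul_assoc, ← Matrix.mul_assoc P]
  exact two_mul_trace_mul_le_frobSq_add C _

lemma two_mul_sSup_trace_conj_le (n : ℕ) (C D : Matrix (Fin n) (Fin n) ℝ) :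
    2 * sSup ((fun P => trace (C * P * D * Pᵀ)) '' OE n) ≤ frobSq C + frobSq D := by
  rw [← le_div_iff₀' two_pos]
  -- `Real.sSup_le` also covers `sSup ∅ = 0`, whence the nonnegativity side condition.
  refine Real.sSup_le ?_ (by linarith [frobSq_nonneg C, frobSq_nonneg D])
  rintro x ⟨P, hP, rfl⟩
  rw [le_div_iff₀' two_pos]
  exact two_mul_trace_conj_le C D hP.1

theorem OGW_symm_nonneg_general (n : ℕ) :
    (∀ C D : Matrix (Fin n) (Fin n) ℝ, C.IsSymm → D.IsSymm → OGW n C D = OGW n D C)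
    ∧ (∀ C D : Matrix (Fin n) (Fin n) ℝ, C.IsSymm → D.IsSymm → 0 ≤ OGW n C D) := by
  refine ⟨fun C D _ _ => ?_, fun C D _ _ => ?_⟩
  · rw [OGW, OGW, image_trace_conj_OE_comm]
    ring
  · have hsup := two_mul_sSup_trace_conj_le n C D
    exact mul_nonneg (by positivity) (by linarith)

/-- `OGW` is symmetric in its arguments and nonnegative on symmetric matrices. -/
theorem OGW_symm_nonneg (n : ℕ) (hn : 1 ≤ n) :
    (∀ C D : Matrix (Fin n) (Fin n) ℝ, C.IsSymm → D.IsSymm → OGW n C D = OGW n D C)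
    ∧ (∀ C D : Matrix (Fin n) (Fin n) ℝ, C.IsSymm → D.IsSymm → 0 ≤ OGW n C D) :=
  OGW_symm_nonneg_general n

end
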